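/- arXiv:2503.20569 — 2 statements merged into one kernel-verified Lean document; each statement's English description precedes it below -/
import Mathlib

section
/- Let f₀, f₁ : ℝⁿ → ℝⁿ be Lipschitz with constants k₀, k₁, let u, v : [t₀,T] → ℝ be measurable controls bounded by M, and let x_u, x_v be the corresponding solutions of ẋ = f₀(x) + f₁(x)u(t) with the same initial condition x₀. If |f₁(y)| ≤ c₁(1 + |y|) and both trajectories are bounded by C_x, then for all t ∈ [t₀,T], |x_u(t) − x_v(t)| ≤ c₁(1 + C_x)(t − t₀)^{1/2} · exp((k₀ + M k₁)(t − t₀)) · ‖u − v‖_{L²(t₀,T)}. -/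
/-!
Subtracting the two integral equations and splitting the integrand as
`(f₀ xu - f₀ xv) + u (f₁ xu - f₁ xv) + (u - v) f₁ xv` bounds `‖xu s - xv s‖` by
`(k₀ + M k₁) ∫ ‖xu - xv‖ + c₁ (1 + Cx) ∫ |u - v|`. Cauchy–Schwarz turns the last integral into
`√(t - t₀) ‖u - v‖_{L²}`, and the integral form of Grönwall's inequality concludes.
-/

open MeasureTheory Set Real

theorem add_mul_gronwallBound_zero (A L x : ℝ) :
    A + L * gronwallBound 0 L A x = A * exp (L * x) := by
  rcases eq_or_ne L 0 with rfl | hL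
  · simp [gronwallBound_K0]
  · rw [gronwallBound_of_K_ne_0 hL]
    field_simp
    ring

theorem le_mul_exp_of_le_add_mul_integral {φ : ℝ → ℝ} {a b A L : ℝ} (hab : a ≤ b) (hL : 0 ≤ L)
    (hφ : ContinuousOn φ (Icc a b)) (h : ∀ s ∈ Icc a b, φ s ≤ A + L * ∫ σ in a..s, φ σ) :
    φ b ≤ A * exp (L * (b - a)) := by
  set F := fun s => ∫ σ in a..s, φ σ
  have hF : ∀ s ∈ Icc a b, HasDerivWithinAt F (φ s) (Icc a b) s := by
    intro s hs
    have : Fact (s ∈ Icc a b) := ⟨hs⟩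
    exact intervalIntegral.integral_hasDerivWithinAt_right
      (hφ.mono (uIcc_subset_Icc (left_mem_Icc.2 hab) hs)).intervalIntegrable
      (hφ.stronglyMeasurableAtFilter_nhdsWithin measurableSet_Icc s) (hφ s hs)
  have hFb : F b ≤ gronwallBound 0 L A (b - a) :=
    le_gronwallBound_of_liminf_deriv_right_le (fun s hs => (hF s hs).continuousWithinAt)
      (fun s hs _ hr => ((hF s (Ico_subset_Icc_self hs)).mono_of_mem_nhdsWithin
        (Icc_mem_nhdsGE_of_mem hs)).liminf_right_slope_le hr)
      (by simp [F]) (fun s hs => by linarith [h s (Ico_subset_Icc_self hs)])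
      b (right_mem_Icc.2 hab)
  calc φ b ≤ A + L * F b := h b (right_mem_Icc.2 hab)
    _ ≤ A + L * gronwallBound 0 L A (b - a) := by gcongr
    _ = A * exp (L * (b - a)) := add_mul_gronwallBound_zero A L (b - a)

theorem integral_abs_le_sqrt_measureReal_mul_sqrt_integral_sq {α : Type*} [MeasurableSpace α]
    {μ : Measure α} [IsFiniteMeasure μ] {w : α → ℝ} (hw : MemLp w 2 μ) :
    ∫ x, |w x| ∂μ ≤ √(μ.real univ) * √(∫ x, w x ^ 2 ∂μ) := by
  have h2 : ENNReal.ofReal 2 = 2 := by norm_num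
  have := integral_mul_le_Lp_mul_Lq_of_nonneg (μ := μ) Real.HolderConjugate.two_two
    (f := fun _ => (1 : ℝ)) (g := fun x => |w x|) (ae_of_all _ fun _ => zero_le_one)
    (ae_of_all _ fun x => abs_nonneg (w x)) (h2 ▸ memLp_const 1) (h2 ▸ hw.abs)
  simpa only [one_mul, one_pow, one_rpow, integral_const, smul_eq_mul, mul_one, rpow_two, sq_abs,
    ← sqrt_eq_rpow] using this

theorem intervalIntegral.integral_abs_le_sqrt_mul_sqrt_integral_sq {w : ℝ → ℝ} {a b : ℝ}
    (hab : a ≤ b) (hw : MemLp w 2 (volume.restrict (Ioc a b))) :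
    ∫ σ in a..b, |w σ| ≤ √(b - a) * √(∫ σ in a..b, w σ ^ 2) := by
  simpa only [intervalIntegral.integral_of_le hab, measureReal_restrict_apply_univ,
    volume_real_Ioc_of_le hab] using integral_abs_le_sqrt_measureReal_mul_sqrt_integral_sq hw

theorem nonneg_of_norm_sub_le_mul {E F : Type*} [NormedAddCommGroup E] [SeminormedAddCommGroup F]
    {f : E → F} {k : ℝ} (hf : ∀ y y', ‖f y - f y'‖ ≤ k * ‖y - y'‖) {y y' : E} (hyy' : y ≠ y') :
    0 ≤ k :=
  nonneg_of_mul_nonneg_left ((norm_nonneg _).trans (hf y y'))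
    (norm_pos_iff.2 (sub_ne_zero.2 hyy'))

theorem continuous_of_norm_sub_le_mul {E F : Type*} [SeminormedAddCommGroup E]
    [SeminormedAddCommGroup F] {f : E → F} {k : ℝ} (hf : ∀ y y', ‖f y - f y'‖ ≤ k * ‖y - y'‖) :
    Continuous f :=
  (LipschitzWith.of_dist_le' (K := k) fun y y' => by
    simpa only [dist_eq_norm] using hf y y').continuous

theorem nonneg_of_ae_restrict_Icc_abs_le {u : ℝ → ℝ} {a b M : ℝ} (hab : a < b)
    (hu : ∀ᵐ t ∂(volume.restrict (Icc a b)), |u t| ≤ M) : 0 ≤ M := by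
  have : (ae (volume.restrict (Icc a b))).NeBot := by
    rw [ae_restrict_neBot, Real.volume_Icc]
    simpa using hab
  obtain ⟨t, ht⟩ := hu.exists
  exact (abs_nonneg _).trans ht

section ControlledField

variable {E : Type*} [NormedAddCommGroup E] [NormedSpace ℝ E]

def controlField (f₀ f₁ : E → E) (w : ℝ) (y : E) : E := f₀ y + w • f₁ y

variable {f₀ f₁ : E → E}

theorem norm_controlField_sub_le {k₀ k₁ M p q : ℝ}
    (hf₀ : ∀ y y', ‖f₀ y - f₀ y'‖ ≤ k₀ * ‖y - y'‖) (hf₁ : ∀ y y', ‖f₁ y - f₁ y'‖ ≤ k₁ * ‖y - y'‖)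
    (hp : |p| ≤ M) (y y' : E) :
    ‖controlField f₀ f₁ p y - controlField f₀ f₁ q y'‖ ≤
      (k₀ + M * k₁) * ‖y - y'‖ + ‖f₁ y'‖ * |p - q| := by
  have hM : 0 ≤ M := (abs_nonneg p).trans hp
  have hsplit : controlField f₀ f₁ p y - controlField f₀ f₁ q y' =
      (f₀ y - f₀ y') + p • (f₁ y - f₁ y') + (p - q) • f₁ y' := by
    simp only [controlField, smul_sub, sub_smul]
    abel
  calc ‖controlField f₀ f₁ p y - controlField f₀ f₁ q y'‖
      ≤ ‖f₀ y - f₀ y'‖ + ‖p • (f₁ y - f₁ y')‖ + ‖(p - q) • f₁ y'‖ := hsplit ▸ norm_add₃_le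
    _ ≤ k₀ * ‖y - y'‖ + M * (k₁ * ‖y - y'‖) + |p - q| * ‖f₁ y'‖ := by
        rw [norm_smul, norm_smul, Real.norm_eq_abs, Real.norm_eq_abs]
        gcongr
        exacts [hf₀ y y', hf₁ y y']
    _ = (k₀ + M * k₁) * ‖y - y'‖ + ‖f₁ y'‖ * |p - q| := by ring

theorem integrableOn_controlField (hf₀ : Continuous f₀) (hf₁ : Continuous f₁) {x : ℝ → E}
    {u : ℝ → ℝ} {a b : ℝ} (hx : ContinuousOn x (Icc a b))
    (hu : MemLp u ⊤ (volume.restrict (Icc a b))) :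
    IntegrableOn (fun σ => controlField f₀ f₁ (u σ) (x σ)) (Icc a b) :=
  (hf₀.comp_continuousOn hx).integrableOn_Icc.add
    ((hf₁.comp_continuousOn hx).integrableOn_Icc.smul_of_top_right hu)

theorem norm_sub_le_integral_of_controlled_trajectories {k₀ k₁ M C a b : ℝ} {u v : ℝ → ℝ}
    {xu xv : ℝ → E} {x₀ : E} (hab : a ≤ b)
    (hf₀ : ∀ y y', ‖f₀ y - f₀ y'‖ ≤ k₀ * ‖y - y'‖) (hf₁ : ∀ y y', ‖f₁ y - f₁ y'‖ ≤ k₁ * ‖y - y'‖)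
    (hu : ∀ᵐ t ∂(volume.restrict (Icc a b)), |u t| ≤ M) (hC : ∀ t ∈ Icc a b, ‖f₁ (xv t)‖ ≤ C)
    (hgu : IntervalIntegrable (fun σ => controlField f₀ f₁ (u σ) (xu σ)) volume a b)
    (hgv : IntervalIntegrable (fun σ => controlField f₀ f₁ (v σ) (xv σ)) volume a b)
    (hφ : IntervalIntegrable (fun σ => ‖xu σ - xv σ‖) volume a b)
    (hw : IntervalIntegrable (fun σ => |u σ - v σ|) volume a b)
    (hequ : xu b = x₀ + ∫ σ in a..b, controlField f₀ f₁ (u σ) (xu σ))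
    (heqv : xv b = x₀ + ∫ σ in a..b, controlField f₀ f₁ (v σ) (xv σ)) :
    ‖xu b - xv b‖ ≤
      (k₀ + M * k₁) * (∫ σ in a..b, ‖xu σ - xv σ‖) + C * ∫ σ in a..b, |u σ - v σ| := by
  have hbound : ∀ᵐ σ, σ ∈ Ioc a b → ‖controlField f₀ f₁ (u σ) (xu σ) -
      controlField f₀ f₁ (v σ) (xv σ)‖ ≤ (k₀ + M * k₁) * ‖xu σ - xv σ‖ + C * |u σ - v σ| := by
    filter_upwards [(ae_restrict_iff' measurableSet_Icc).1 hu] with σ hσu hσ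
    calc _ ≤ (k₀ + M * k₁) * ‖xu σ - xv σ‖ + ‖f₁ (xv σ)‖ * |u σ - v σ| :=
          norm_controlField_sub_le hf₀ hf₁ (hσu (Ioc_subset_Icc_self hσ)) _ _
      _ ≤ (k₀ + M * k₁) * ‖xu σ - xv σ‖ + C * |u σ - v σ| := by
          gcongr
          exact hC σ (Ioc_subset_Icc_self hσ)
  calc ‖xu b - xv b‖
      = ‖∫ σ in a..b, (controlField f₀ f₁ (u σ) (xu σ) - controlField f₀ f₁ (v σ) (xv σ))‖ := by
        rw [hequ, heqv, add_sub_add_left_eq_sub, intervalIntegral.integral_sub hgu hgv]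
    _ ≤ ∫ σ in a..b, ((k₀ + M * k₁) * ‖xu σ - xv σ‖ + C * |u σ - v σ|) :=
        intervalIntegral.norm_integral_le_of_norm_le hab hbound
          ((hφ.const_mul _).add (hw.const_mul C))
    _ = (k₀ + M * k₁) * (∫ σ in a..b, ‖xu σ - xv σ‖) + C * ∫ σ in a..b, |u σ - v σ| := by
        rw [intervalIntegral.integral_add (hφ.const_mul _) (hw.const_mul C),
          intervalIntegral.integral_const_mul, intervalIntegral.integral_const_mul]

theorem norm_sub_le_of_controlled_trajectories {k₀ k₁ M C a b : ℝ} {u v : ℝ → ℝ}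
    {xu xv : ℝ → E} {x₀ : E}
    (hf₀ : ∀ y y', ‖f₀ y - f₀ y'‖ ≤ k₀ * ‖y - y'‖) (hf₁ : ∀ y y', ‖f₁ y - f₁ y'‖ ≤ k₁ * ‖y - y'‖)
    (hL : 0 ≤ k₀ + M * k₁) (hu : ∀ᵐ t ∂(volume.restrict (Icc a b)), |u t| ≤ M)
    (hC : ∀ t ∈ Icc a b, ‖f₁ (xv t)‖ ≤ C)
    (hxu : ContinuousOn xu (Icc a b)) (hxv : ContinuousOn xv (Icc a b))
    (hgu : IntegrableOn (fun σ => controlField f₀ f₁ (u σ) (xu σ)) (Icc a b))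
    (hgv : IntegrableOn (fun σ => controlField f₀ f₁ (v σ) (xv σ)) (Icc a b))
    (hw : MemLp (u - v) 2 (volume.restrict (Icc a b)))
    (hequ : ∀ t ∈ Icc a b, xu t = x₀ + ∫ σ in a..t, controlField f₀ f₁ (u σ) (xu σ))
    (heqv : ∀ t ∈ Icc a b, xv t = x₀ + ∫ σ in a..t, controlField f₀ f₁ (v σ) (xv σ)) :
    ∀ t ∈ Icc a b, ‖xu t - xv t‖ ≤ C * √(t - a) * exp ((k₀ + M * k₁) * (t - a)) *
      √(∫ σ in a..b, (u σ - v σ) ^ 2) := by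
  intro t ht
  have hC₀ : 0 ≤ C := (norm_nonneg _).trans (hC t ht)
  have hφ : ContinuousOn (fun σ => ‖xu σ - xv σ‖) (Icc a b) := (hxu.sub hxv).norm
  have hw₁ : IntegrableOn (fun σ => |u σ - v σ|) (Icc a b) := (hw.integrable one_le_two).abs
  have hw₂ : IntervalIntegrable (fun σ => (u σ - v σ) ^ 2) volume a b :=
    (intervalIntegrable_iff_integrableOn_Icc_of_le (ht.1.trans ht.2)).2 hw.integrable_sq
  have hkey : ∀ s ∈ Icc a t, ‖xu s - xv s‖ ≤
      C * (√(t - a) * √(∫ σ in a..b, (u σ - v σ) ^ 2)) +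
        (k₀ + M * k₁) * ∫ σ in a..s, ‖xu σ - xv σ‖ := by
    intro s hs
    have hsb : s ∈ Icc a b := ⟨hs.1, hs.2.trans ht.2⟩
    have hsub : Icc a s ⊆ Icc a b := Icc_subset_Icc_right hsb.2
    have has : uIcc a s ⊆ Icc a b := (uIcc_of_le hs.1).trans_subset hsub
    have hCS : ∫ σ in a..s, |u σ - v σ| ≤ √(t - a) * √(∫ σ in a..b, (u σ - v σ) ^ 2) := by
      refine (intervalIntegral.integral_abs_le_sqrt_mul_sqrt_integral_sq hs.1
        (hw.mono_measure (Measure.restrict_mono (Ioc_subset_Icc_self.trans hsub) le_rfl))).trans ?_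
      gcongr
      · exact hs.2
      · exact intervalIntegral.integral_mono_interval le_rfl hs.1 hsb.2
          (ae_of_all _ fun σ => sq_nonneg _) hw₂
    have := norm_sub_le_integral_of_controlled_trajectories hs.1 hf₀ hf₁
      (ae_restrict_of_ae_restrict_of_subset hsub hu) (fun σ hσ => hC σ (hsub hσ))
      (hgu.mono_set has).intervalIntegrable (hgv.mono_set has).intervalIntegrable
      (hφ.mono has).intervalIntegrable (hw₁.mono_set has).intervalIntegrable
      (hequ s hsb) (heqv s hsb)
    linarith [mul_le_mul_of_nonneg_left hCS hC₀]
  calc ‖xu t - xv t‖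
      ≤ C * (√(t - a) * √(∫ σ in a..b, (u σ - v σ) ^ 2)) * exp ((k₀ + M * k₁) * (t - a)) :=
        le_mul_exp_of_le_add_mul_integral ht.1 hL (hφ.mono (Icc_subset_Icc_right ht.2)) hkey
    _ = _ := by ring

end ControlledField

theorem stmt_2_general (n : ℕ) (t₀ T k₀ k₁ c₁ M Cx : ℝ)
    (f₀ f₁ : EuclideanSpace ℝ (Fin n) → EuclideanSpace ℝ (Fin n))
    (hf₀lip : ∀ y y', ‖f₀ y - f₀ y'‖ ≤ k₀ * ‖y - y'‖)
    (hf₁lip : ∀ y y', ‖f₁ y - f₁ y'‖ ≤ k₁ * ‖y - y'‖)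
    (hf₁ : ∀ y, ‖f₁ y‖ ≤ c₁ * (1 + ‖y‖))
    (u v : ℝ → ℝ) (hu_meas : Measurable u) (hv_meas : Measurable v)
    (hu : ∀ᵐ t ∂(volume.restrict (Set.Icc t₀ T)), |u t| ≤ M)
    (hv : ∀ᵐ t ∂(volume.restrict (Set.Icc t₀ T)), |v t| ≤ M)
    (xu xv : ℝ → EuclideanSpace ℝ (Fin n)) (x₀ : EuclideanSpace ℝ (Fin n))
    (hxu : ContinuousOn xu (Set.Icc t₀ T)) (hxv : ContinuousOn xv (Set.Icc t₀ T))
    (hequ : ∀ t ∈ Set.Icc t₀ T,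
      xu t = x₀ + ∫ σ in t₀..t, (f₀ (xu σ) + u σ • f₁ (xu σ)))
    (heqv : ∀ t ∈ Set.Icc t₀ T,
      xv t = x₀ + ∫ σ in t₀..t, (f₀ (xv σ) + v σ • f₁ (xv σ)))
    (hbv : ∀ t ∈ Set.Icc t₀ T, ‖xv t‖ ≤ Cx) :
    ∀ t ∈ Set.Icc t₀ T,
      ‖xu t - xv t‖ ≤ c₁ * (1 + Cx) * Real.sqrt (t - t₀) *
        Real.exp ((k₀ + M * k₁) * (t - t₀)) *
        Real.sqrt (∫ σ in t₀..T, (u σ - v σ) ^ 2) := by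
  intro t ht
  have hc₁ : 0 ≤ c₁ := by simpa using (norm_nonneg _).trans (hf₁ 0)
  have hC : 0 ≤ c₁ * (1 + Cx) := mul_nonneg hc₁ (by linarith [(norm_nonneg _).trans (hbv t ht)])
  -- Only distinct values `xu t ≠ xv t` force `k₀, k₁ ≥ 0`, and only `t₀ < t` forces `M ≥ 0`.
  by_cases hxt : xu t = xv t
  · rw [hxt, sub_self, norm_zero]
    exact mul_nonneg (mul_nonneg (mul_nonneg hC (sqrt_nonneg _)) (exp_pos _).le) (sqrt_nonneg _)
  have ht₀ : t₀ < t := ht.1.lt_of_ne fun h => hxt <| by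
    subst h
    rw [hequ _ ht, heqv _ ht, intervalIntegral.integral_same, intervalIntegral.integral_same]
  have hM : 0 ≤ M := nonneg_of_ae_restrict_Icc_abs_le (ht₀.trans_le ht.2) hu
  have hL : 0 ≤ k₀ + M * k₁ := add_nonneg (nonneg_of_norm_sub_le_mul hf₀lip hxt)
    (mul_nonneg hM (nonneg_of_norm_sub_le_mul hf₁lip hxt))
  have huL : MemLp u ⊤ (volume.restrict (Icc t₀ T)) :=
    memLp_top_of_bound hu_meas.aestronglyMeasurable M (by simpa only [norm_eq_abs] using hu)
  have hvL : MemLp v ⊤ (volume.restrict (Icc t₀ T)) :=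
    memLp_top_of_bound hv_meas.aestronglyMeasurable M (by simpa only [norm_eq_abs] using hv)
  have hf₀c : Continuous f₀ := continuous_of_norm_sub_le_mul hf₀lip
  have hf₁c : Continuous f₁ := continuous_of_norm_sub_le_mul hf₁lip
  exact norm_sub_le_of_controlled_trajectories hf₀lip hf₁lip hL hu
    (fun σ hσ => (hf₁ _).trans (by gcongr; exact hbv σ hσ)) hxu hxv
    (integrableOn_controlField hf₀c hf₁c hxu huL) (integrableOn_controlField hf₀c hf₁c hxv hvL)
    ((huL.sub hvL).mono_exponent le_top) hequ heqv t ht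

theorem stmt_2 (n : ℕ) (t₀ T k₀ k₁ c₁ M Cx : ℝ) (ht : t₀ ≤ T)
    (f₀ f₁ : EuclideanSpace ℝ (Fin n) → EuclideanSpace ℝ (Fin n))
    (hf₀lip : ∀ y y', ‖f₀ y - f₀ y'‖ ≤ k₀ * ‖y - y'‖)
    (hf₁lip : ∀ y y', ‖f₁ y - f₁ y'‖ ≤ k₁ * ‖y - y'‖)
    (hf₁ : ∀ y, ‖f₁ y‖ ≤ c₁ * (1 + ‖y‖))
    (u v : ℝ → ℝ) (hu_meas : Measurable u) (hv_meas : Measurable v)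
    (hu : ∀ᵐ t ∂(volume.restrict (Set.Icc t₀ T)), |u t| ≤ M)
    (hv : ∀ᵐ t ∂(volume.restrict (Set.Icc t₀ T)), |v t| ≤ M)
    (xu xv : ℝ → EuclideanSpace ℝ (Fin n)) (x₀ : EuclideanSpace ℝ (Fin n))
    (hxu : ContinuousOn xu (Set.Icc t₀ T)) (hxv : ContinuousOn xv (Set.Icc t₀ T))
    (hequ : ∀ t ∈ Set.Icc t₀ T,
      xu t = x₀ + ∫ σ in t₀..t, (f₀ (xu σ) + u σ • f₁ (xu σ)))
    (heqv : ∀ t ∈ Set.Icc t₀ T,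
      xv t = x₀ + ∫ σ in t₀..t, (f₀ (xv σ) + v σ • f₁ (xv σ)))
    (hbu : ∀ t ∈ Set.Icc t₀ T, ‖xu t‖ ≤ Cx)
    (hbv : ∀ t ∈ Set.Icc t₀ T, ‖xv t‖ ≤ Cx) :
    ∀ t ∈ Set.Icc t₀ T,
      ‖xu t - xv t‖ ≤ c₁ * (1 + Cx) * Real.sqrt (t - t₀) *
        Real.exp ((k₀ + M * k₁) * (t - t₀)) *
        Real.sqrt (∫ σ in t₀..T, (u σ - v σ) ^ 2) :=
  stmt_2_general n t₀ T k₀ k₁ c₁ M Cx f₀ f₁ hf₀lip hf₁lip hf₁ u v hu_meas hv_meas hu hv xu xv x₀ hxu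
    hxv hequ heqv hbv
end

section
/- Let (u_k) be a sequence in L^∞(t₀,T;ℝ) with |u_k(t)| ≤ M a.e., converging weak-* in L^∞ to ū, and let (x_k) be continuous functions on [t₀,T] converging uniformly to x̄. Let f₀, f₁ : ℝⁿ → ℝⁿ be Lipschitz with sublinear growth. If each x_k satisfies x_k(t) = x₀ + ∫_{t₀}^t [f₀(x_k(σ)) + f₁(x_k(σ))u_k(σ)] dσ for all t, then x̄ satisfies x̄(t) = x₀ + ∫_{t₀}^t [f₀(x̄(σ)) + f₁(x̄(σ))ū(σ)] dσ for all t ∈ [t₀,T]. -/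
/-!
The integrand splits as
`F(x_k, u_k) = F(x̄, u_k) + (F(x_k, u_k) - F(x̄, u_k))`, where `F(y, v) = f₀ y + v • f₁ y`.
The second term is bounded by `(K₀ + M K₁) ‖x_k - x̄‖` and tends to `0` uniformly, and the
integral of the first converges by weak-* convergence, tested against the coordinates of the
integrable function `1_{(t₀, t]} f₁ ∘ x̄`. Passing to the limit in the state equation at a fixed
time then gives the equation for `x̄`. The limit `ū` is only known to be measurable, so
`ū • f₁ ∘ x̄` must be shown integrable: testing against indicators of `{M < ū ≤ N}` shows that
`|ū| ≤ M` a.e.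
-/

open MeasureTheory Filter Topology Set
open scoped NNReal

variable {α ι : Type*} [MeasurableSpace α] {μ : Measure α} {l : Filter ι}

def WeakStarTendsto (μ : Measure α) (l : Filter ι) (u : ι → α → ℝ) (ubar : α → ℝ) : Prop :=
  ∀ φ : α → ℝ, Integrable φ μ →
    Tendsto (fun k => ∫ a, u k a * φ a ∂μ) l (𝓝 (∫ a, ubar a * φ a ∂μ))

theorem tendsto_integral_of_forall_ae_norm_le {G : Type*} [NormedAddCommGroup G] [NormedSpace ℝ G]
    [IsFiniteMeasure μ] {g : ι → α → G} (h : ∀ ε > 0, ∀ᶠ k in l, ∀ᵐ a ∂μ, ‖g k a‖ ≤ ε) :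
    Tendsto (fun k => ∫ a, g k a ∂μ) l (𝓝 0) := by
  refine Metric.tendsto_nhds.2 fun ε hε => ?_
  have hC : 0 < μ.real univ + 1 := by positivity
  filter_upwards [h (ε / (μ.real univ + 1)) (div_pos hε hC)] with k hk
  rw [dist_zero_right]
  calc ‖∫ a, g k a ∂μ‖ ≤ ε / (μ.real univ + 1) * μ.real univ := norm_integral_le_of_norm_le_const hk
    _ < ε / (μ.real univ + 1) * (μ.real univ + 1) := by gcongr; linarith
    _ = ε := div_mul_cancel₀ ε hC.ne'

theorem norm_add_smul_sub_add_smul_le {E F : Type*} [PseudoMetricSpace E] [NormedAddCommGroup F]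
    [NormedSpace ℝ F] {f₀ f₁ : E → F} {K₀ K₁ : ℝ≥0} (hf₀ : LipschitzWith K₀ f₀)
    (hf₁ : LipschitzWith K₁ f₁) (y y' : E) (v : ℝ) :
    ‖(f₀ y + v • f₁ y) - (f₀ y' + v • f₁ y')‖ ≤ (K₀ + |v| * K₁) * dist y y' := by
  calc ‖(f₀ y + v • f₁ y) - (f₀ y' + v • f₁ y')‖ = ‖(f₀ y - f₀ y') + v • (f₁ y - f₁ y')‖ := by
        rw [smul_sub, add_sub_add_comm]
    _ ≤ ‖f₀ y - f₀ y'‖ + |v| * ‖f₁ y - f₁ y'‖ := by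
        rw [← Real.norm_eq_abs, ← norm_smul]; exact norm_add_le _ _
    _ ≤ K₀ * dist y y' + |v| * (K₁ * dist y y') := by
        rw [← dist_eq_norm, ← dist_eq_norm]
        gcongr
        exacts [hf₀.dist_le_mul y y', hf₁.dist_le_mul y y']
    _ = (K₀ + |v| * K₁) * dist y y' := by ring

namespace WeakStarTendsto

variable {u : ι → α → ℝ} {ubar : α → ℝ}

theorem neg (h : WeakStarTendsto μ l u ubar) :
    WeakStarTendsto μ l (fun k a => -u k a) (fun a => -ubar a) := fun φ hφ => by
  simpa only [neg_mul, integral_neg] using (h φ hφ).neg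

theorem restrict (h : WeakStarTendsto μ l u ubar) {s : Set α} (hs : MeasurableSet s) :
    WeakStarTendsto (μ.restrict s) l u ubar := fun φ hφ => by
  have key : ∀ v : α → ℝ, ∫ a, v a * s.indicator φ a ∂μ = ∫ a in s, v a * φ a ∂μ := fun v => by
    simp_rw [← indicator_mul_right, integral_indicator hs]
  simpa only [key] using h _ ((integrable_indicator_iff hs).2 hφ)

theorem setIntegral_le [IsFiniteMeasure μ] [l.NeBot] (h : WeakStarTendsto μ l u ubar) {M : ℝ}
    (hM : ∀ k, ∀ᵐ a ∂μ, |u k a| ≤ M) {s : Set α} (hs : MeasurableSet s) :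
    ∫ a in s, ubar a ∂μ ≤ M * μ.real s := by
  have hind : ∀ v : α → ℝ, ∫ a, v a * s.indicator (fun _ => 1) a ∂μ = ∫ a in s, v a ∂μ :=
    fun v => by simp_rw [← indicator_mul_right, mul_one, integral_indicator hs]
  have hlim := h (s.indicator fun _ => 1)
    ((integrable_indicator_iff hs).2 (integrableOn_const (measure_ne_top μ s)))
  simp only [hind] at hlim
  refine le_of_tendsto' hlim fun k => ?_
  calc ∫ a in s, u k a ∂μ ≤ ‖∫ a in s, u k a ∂μ‖ := Real.le_norm_self _
    _ ≤ M * (μ.restrict s).real univ :=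
      norm_integral_le_of_norm_le_const (ae_restrict_of_ae (hM k))
    _ = M * μ.real s := by rw [measureReal_restrict_apply_univ]

theorem ae_le [IsFiniteMeasure μ] [l.NeBot] (h : WeakStarTendsto μ l u ubar) {M : ℝ}
    (hM : ∀ k, ∀ᵐ a ∂μ, |u k a| ≤ M) (hubar : Measurable ubar) :
    ∀ᵐ a ∂μ, ubar a ≤ M := by
  have hnull : ∀ N : ℕ, μ {a | M < ubar a ∧ ubar a ≤ N} = 0 := by
    intro N
    set s := {a | M < ubar a ∧ ubar a ≤ N}
    have hs : MeasurableSet s :=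
      (measurableSet_lt measurable_const hubar).inter (measurableSet_le hubar measurable_const)
    have hconst : IntegrableOn (fun _ => M) s μ := integrableOn_const (measure_ne_top μ s)
    have hubar_int : IntegrableOn ubar s μ := by
      refine Measure.integrableOn_of_bounded (M := max |M| N) (measure_ne_top μ s)
        hubar.aestronglyMeasurable ?_
      filter_upwards [ae_restrict_mem hs] with a ⟨hMa, haN⟩
      rw [Real.norm_eq_abs, abs_le]
      constructor <;> linarith [neg_abs_le M, le_max_left |M| N, le_max_right |M| (N : ℝ)]
    by_contra hpos
    have hgap : 0 < ∫ a in s, (ubar a - M) ∂μ := by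
      rw [setIntegral_pos_iff_support_of_nonneg_ae (f := fun a => ubar a - M) _
        (hubar_int.sub hconst)]
      · have hsupp : Function.support (fun a => ubar a - M) ∩ s = s :=
          inter_eq_right.2 fun a ha => sub_ne_zero.2 ha.1.ne'
        rwa [hsupp, pos_iff_ne_zero]
      · filter_upwards [ae_restrict_mem hs] with a ha using sub_nonneg.2 ha.1.le
    rw [integral_sub hubar_int hconst, setIntegral_const, smul_eq_mul] at hgap
    linarith [h.setIntegral_le hM hs]
  have hcover : {a | ¬ubar a ≤ M} ⊆ ⋃ N : ℕ, {a | M < ubar a ∧ ubar a ≤ N} := fun a ha =>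
    mem_iUnion.2 ⟨⌈ubar a⌉₊, not_le.1 ha, Nat.le_ceil _⟩
  exact measure_mono_null hcover (measure_iUnion_null hnull)

theorem ae_abs_le [IsFiniteMeasure μ] [l.NeBot] (h : WeakStarTendsto μ l u ubar) {M : ℝ}
    (hM : ∀ k, ∀ᵐ a ∂μ, |u k a| ≤ M) (hubar : Measurable ubar) :
    ∀ᵐ a ∂μ, |ubar a| ≤ M := by
  have hupper := h.ae_le hM hubar
  have hlower := h.neg.ae_le (by simpa only [abs_neg] using hM) hubar.neg
  filter_upwards [hupper, hlower] with a h₁ h₂ using abs_le.2 ⟨by linarith, h₁⟩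

theorem tendsto_integral_smul {E : Type*} [NormedAddCommGroup E] [NormedSpace ℝ E]
    [FiniteDimensional ℝ E] (h : WeakStarTendsto μ l u ubar) {φ : α → E} (hφ : Integrable φ μ)
    (hu : ∀ k, Integrable (fun a => u k a • φ a) μ) (hubar : Integrable (fun a => ubar a • φ a) μ) :
    Tendsto (fun k => ∫ a, u k a • φ a ∂μ) l (𝓝 (∫ a, ubar a • φ a ∂μ)) := by
  have := FiniteDimensional.complete ℝ E
  let e := (Module.finBasis ℝ E).equivFunL
  suffices Tendsto (fun k => e (∫ a, u k a • φ a ∂μ)) l (𝓝 (e (∫ a, ubar a • φ a ∂μ))) by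
    simpa [Function.comp_def] using (e.symm.continuous.tendsto _).comp this
  let L i := (ContinuousLinearMap.proj i).comp e.toContinuousLinearMap
  have hcoord : ∀ (v : α → ℝ) i, Integrable (fun a => v a • φ a) μ →
      e (∫ a, v a • φ a ∂μ) i = ∫ a, v a * e (φ a) i ∂μ := fun v i hv => by
    simpa [L] using ((L i).integral_comp_comm hv).symm
  refine tendsto_pi_nhds.2 fun i => ?_
  simp only [hcoord _ i (hu _), hcoord _ i hubar]
  exact h _ ((L i).integrable_comp hφ)

theorem tendsto_integral_controlAffine {E F : Type*} [PseudoMetricSpace E] [NormedAddCommGroup F]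
    [NormedSpace ℝ F] [FiniteDimensional ℝ F] [IsFiniteMeasure μ] [l.NeBot]
    {f₀ f₁ : E → F} {K₀ K₁ : ℝ≥0} (hf₀ : LipschitzWith K₀ f₀) (hf₁ : LipschitzWith K₁ f₁)
    (h : WeakStarTendsto μ l u ubar) (hu : ∀ k, AEStronglyMeasurable (u k) μ)
    (hubar : Measurable ubar) {M : ℝ} (hM : ∀ k, ∀ᵐ a ∂μ, |u k a| ≤ M)
    {x : ι → α → E} {xbar : α → E} {s : Set α} (hx : TendstoUniformlyOn x xbar l s)
    (hs : ∀ᵐ a ∂μ, a ∈ s)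
    (hx₀ : ∀ k, Integrable (fun a => f₀ (x k a)) μ) (hx₁ : ∀ k, Integrable (fun a => f₁ (x k a)) μ)
    (hxbar₀ : Integrable (fun a => f₀ (xbar a)) μ) (hxbar₁ : Integrable (fun a => f₁ (xbar a)) μ) :
    Tendsto (fun k => ∫ a, f₀ (x k a) + u k a • f₁ (x k a) ∂μ) l
      (𝓝 (∫ a, f₀ (xbar a) + ubar a • f₁ (xbar a) ∂μ)) := by
  have hubar_smul : Integrable (fun a => ubar a • f₁ (xbar a)) μ :=
    hxbar₁.bdd_smul M hubar.aestronglyMeasurable (h.ae_abs_le hM hubar)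
  have hu_smul : ∀ k, Integrable (fun a => u k a • f₁ (xbar a)) μ := fun k =>
    hxbar₁.bdd_smul M (hu k) (hM k)
  have hlimit : Tendsto (fun k => ∫ a, f₀ (xbar a) + u k a • f₁ (xbar a) ∂μ) l
      (𝓝 (∫ a, f₀ (xbar a) + ubar a • f₁ (xbar a) ∂μ)) := by
    simp only [integral_add hxbar₀ (hu_smul _), integral_add hxbar₀ hubar_smul]
    exact tendsto_const_nhds.add (h.tendsto_integral_smul hxbar₁ hu_smul hubar_smul)
  have herror : Tendsto (fun k => ∫ a, (f₀ (x k a) + u k a • f₁ (x k a))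
      - (f₀ (xbar a) + u k a • f₁ (xbar a)) ∂μ) l (𝓝 0) := by
    refine tendsto_integral_of_forall_ae_norm_le fun ε hε => ?_
    have hC : 0 < K₀ + |M| * K₁ + 1 := by positivity
    filter_upwards [Metric.tendstoUniformlyOn_iff.1 hx _ (div_pos hε hC)] with k hk
    filter_upwards [hs, hM k] with a ha hua
    calc _ ≤ (K₀ + |u k a| * K₁) * dist (x k a) (xbar a) :=
          norm_add_smul_sub_add_smul_le hf₀ hf₁ _ _ _
      _ ≤ (K₀ + |M| * K₁ + 1) * (ε / (K₀ + |M| * K₁ + 1)) := by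
        have hK : K₀ + |u k a| * K₁ ≤ K₀ + |M| * K₁ + 1 := by
          have := hua.trans (le_abs_self M)
          have : |u k a| * K₁ ≤ |M| * K₁ := by gcongr
          linarith
        rw [dist_comm]
        exact mul_le_mul hK (hk a ha).le dist_nonneg hC.le
      _ = ε := mul_div_cancel₀ ε hC.ne'
  rw [← add_zero (∫ a, _ ∂μ)]
  refine (hlimit.add herror).congr fun k => ?_
  have hF : Integrable (fun a => f₀ (x k a) + u k a • f₁ (x k a)) μ :=
    (hx₀ k).add ((hx₁ k).bdd_smul M (hu k) (hM k))
  have hG : Integrable (fun a => f₀ (xbar a) + u k a • f₁ (xbar a)) μ := hxbar₀.add (hu_smul k)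
  rw [integral_sub hF hG, add_sub_cancel]

end WeakStarTendsto

theorem stmt_6_general (n : ℕ) (t₀ T M k₀ k₁ : ℝ)
    (f₀ f₁ : EuclideanSpace ℝ (Fin n) → EuclideanSpace ℝ (Fin n))
    (hf₀lip : ∀ y y', ‖f₀ y - f₀ y'‖ ≤ k₀ * ‖y - y'‖)
    (hf₁lip : ∀ y y', ‖f₁ y - f₁ y'‖ ≤ k₁ * ‖y - y'‖)
    (u : ℕ → ℝ → ℝ) (ubar : ℝ → ℝ)
    (hu_meas : ∀ k, Measurable (u k)) (hubar_meas : Measurable ubar)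
    (hu_bd : ∀ k, ∀ᵐ t ∂(volume.restrict (Set.Icc t₀ T)), |u k t| ≤ M)
    (hweak : ∀ φ : ℝ → ℝ, Integrable φ (volume.restrict (Set.Icc t₀ T)) →
      Tendsto (fun k => ∫ t in t₀..T, u k t * φ t) atTop
        (nhds (∫ t in t₀..T, ubar t * φ t)))
    (x : ℕ → ℝ → EuclideanSpace ℝ (Fin n)) (xbar : ℝ → EuclideanSpace ℝ (Fin n))
    (x₀ : EuclideanSpace ℝ (Fin n))
    (hx_cont : ∀ k, ContinuousOn (x k) (Set.Icc t₀ T))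
    (hunif : TendstoUniformlyOn x xbar atTop (Set.Icc t₀ T))
    (heq : ∀ k, ∀ t ∈ Set.Icc t₀ T,
      x k t = x₀ + ∫ σ in t₀..t, (f₀ (x k σ) + u k σ • f₁ (x k σ))) :
    ∀ t ∈ Set.Icc t₀ T,
      xbar t = x₀ + ∫ σ in t₀..t, (f₀ (xbar σ) + ubar σ • f₁ (xbar σ)) := by
  rintro t ⟨ht₀t, htT⟩
  have hsub : Ioc t₀ t ⊆ Icc t₀ T := Ioc_subset_Icc_self.trans (Icc_subset_Icc_right htT)
  have hlip : ∀ {f : EuclideanSpace ℝ (Fin n) → EuclideanSpace ℝ (Fin n)} {k : ℝ},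
      (∀ y y', ‖f y - f y'‖ ≤ k * ‖y - y'‖) → LipschitzWith k.toNNReal f := fun hf =>
    LipschitzWith.of_dist_le' fun y y' => by simpa only [dist_eq_norm] using hf y y'
  have hint : ∀ {g : ℝ → EuclideanSpace ℝ (Fin n)}, ContinuousOn g (Icc t₀ T) →
      Integrable g (volume.restrict (Ioc t₀ t)) := fun hg =>
    ((hg.mono (Icc_subset_Icc_right htT)).integrableOn_Icc).mono_set Ioc_subset_Icc_self
  have hweak' : WeakStarTendsto (volume.restrict (Ioc t₀ t)) atTop u ubar := by
    have hIcc : WeakStarTendsto (volume.restrict (Icc t₀ T)) atTop u ubar := fun φ hφ => by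
      simpa only [intervalIntegral.integral_of_le (ht₀t.trans htT), integral_Icc_eq_integral_Ioc]
        using hweak φ hφ
    simpa only [Measure.restrict_restrict measurableSet_Ioc, inter_eq_left.2 hsub]
      using hIcc.restrict (measurableSet_Ioc (a := t₀) (b := t))
  have hxbar : ContinuousOn xbar (Icc t₀ T) :=
    hunif.continuousOn (Eventually.of_forall hx_cont).frequently
  have hf₀ := hlip hf₀lip
  have hf₁ := hlip hf₁lip
  have hlim := hweak'.tendsto_integral_controlAffine hf₀ hf₁
    (fun k => (hu_meas k).aestronglyMeasurable) hubar_meas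
    (fun k => ae_restrict_of_ae_restrict_of_subset hsub (hu_bd k)) hunif
    (ae_restrict_of_forall_mem measurableSet_Ioc hsub)
    (fun k => hint (hf₀.continuous.comp_continuousOn (hx_cont k)))
    (fun k => hint (hf₁.continuous.comp_continuousOn (hx_cont k)))
    (hint (hf₀.continuous.comp_continuousOn hxbar)) (hint (hf₁.continuous.comp_continuousOn hxbar))
  rw [intervalIntegral.integral_of_le ht₀t]
  refine tendsto_nhds_unique ((hunif.tendsto_at ⟨ht₀t, htT⟩).congr fun k => ?_)
    (tendsto_const_nhds.add hlim)
  rw [heq k t ⟨ht₀t, htT⟩, intervalIntegral.integral_of_le ht₀t]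

theorem stmt_6 (n : ℕ) (t₀ T M k₀ k₁ c₀ c₁ : ℝ) (ht : t₀ ≤ T)
    (f₀ f₁ : EuclideanSpace ℝ (Fin n) → EuclideanSpace ℝ (Fin n))
    (hf₀lip : ∀ y y', ‖f₀ y - f₀ y'‖ ≤ k₀ * ‖y - y'‖)
    (hf₁lip : ∀ y y', ‖f₁ y - f₁ y'‖ ≤ k₁ * ‖y - y'‖)
    (hf₀ : ∀ y, ‖f₀ y‖ ≤ c₀ * (1 + ‖y‖))
    (hf₁ : ∀ y, ‖f₁ y‖ ≤ c₁ * (1 + ‖y‖))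
    (u : ℕ → ℝ → ℝ) (ubar : ℝ → ℝ)
    (hu_meas : ∀ k, Measurable (u k)) (hubar_meas : Measurable ubar)
    (hu_bd : ∀ k, ∀ᵐ t ∂(volume.restrict (Set.Icc t₀ T)), |u k t| ≤ M)
    (hweak : ∀ φ : ℝ → ℝ, Integrable φ (volume.restrict (Set.Icc t₀ T)) →
      Tendsto (fun k => ∫ t in t₀..T, u k t * φ t) atTop
        (nhds (∫ t in t₀..T, ubar t * φ t)))
    (x : ℕ → ℝ → EuclideanSpace ℝ (Fin n)) (xbar : ℝ → EuclideanSpace ℝ (Fin n))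
    (x₀ : EuclideanSpace ℝ (Fin n))
    (hx_cont : ∀ k, ContinuousOn (x k) (Set.Icc t₀ T))
    (hunif : TendstoUniformlyOn x xbar atTop (Set.Icc t₀ T))
    (heq : ∀ k, ∀ t ∈ Set.Icc t₀ T,
      x k t = x₀ + ∫ σ in t₀..t, (f₀ (x k σ) + u k σ • f₁ (x k σ))) :
    ∀ t ∈ Set.Icc t₀ T,
      xbar t = x₀ + ∫ σ in t₀..t, (f₀ (xbar σ) + ubar σ • f₁ (xbar σ)) :=
  stmt_6_general n t₀ T M k₀ k₁ f₀ f₁ hf₀lip hf₁lip u ubar hu_meas hubar_meas hu_bd hweak x xbar x₀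
    hx_cont hunif heq
end
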